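/- Let X be the generalized Darboux–Halphen vector field on ℝ³ with components X₁ = x₂x₃ − x₁(x₂ + x₃) − τ, X₂ = x₁x₃ − x₂(x₁ + x₃) − τ, X₃ = x₁x₂ − x₃(x₁ + x₂) − τ, where τ = a₁²(x₁ − x₃)(x₁ − x₂) + a₂²(x₂ − x₃)(x₂ − x₁) + a₃²(x₃ − x₁)(x₃ − x₂) for constants a₁, a₂, a₃ ∈ ℝ. Then d₁ = x₂ − x₃, d₂ = x₁ − x₃, d₃ = x₁ − x₂ are Darboux polynomials of X with the same cofactors as in the classical case: X(d₁) = −2x₁·d₁, X(d₂) = −2x₂·d₂, X(d₃) = −2x₃·d₃ identically on ℝ³. -/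

import Mathlib

/-- Partial derivative ∂ᵢf at x of a function on ℝⁿ (modeled as `Fin n → ℝ`). -/
noncomputable def pd {n : ℕ} (f : (Fin n → ℝ) → ℝ) (i : Fin n) (x : Fin n → ℝ) : ℝ :=
  fderiv ℝ f x (Pi.single i 1)

/-- Directional derivative Z(f) = Σⱼ Zⱼ ∂ⱼf of f along the vector field Z. -/
noncomputable def lieD {n : ℕ} (Z : Fin n → (Fin n → ℝ) → ℝ) (f : (Fin n → ℝ) → ℝ)
    (x : Fin n → ℝ) : ℝ :=
  ∑ j, Z j x * pd f j x

/-- τ = a₁²(x₁−x₃)(x₁−x₂) + a₂²(x₂−x₃)(x₂−x₁) + a₃²(x₃−x₁)(x₃−x₂). -/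
noncomputable def tauGDH (a₁ a₂ a₃ : ℝ) : (Fin 3 → ℝ) → ℝ := fun y =>
  a₁ ^ 2 * (y 0 - y 2) * (y 0 - y 1) + a₂ ^ 2 * (y 1 - y 2) * (y 1 - y 0) +
    a₃ ^ 2 * (y 2 - y 0) * (y 2 - y 1)

/-- The generalized Darboux–Halphen vector field with shift τ. -/
noncomputable def GDH (a₁ a₂ a₃ : ℝ) : Fin 3 → (Fin 3 → ℝ) → ℝ :=
  ![fun y => y 1 * y 2 - y 0 * (y 1 + y 2) - tauGDH a₁ a₂ a₃ y,
    fun y => y 0 * y 2 - y 1 * (y 0 + y 2) - tauGDH a₁ a₂ a₃ y,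
    fun y => y 0 * y 1 - y 2 * (y 0 + y 1) - tauGDH a₁ a₂ a₃ y]

theorem pd_coord_sub {n : ℕ} (i j k : Fin n) (x : Fin n → ℝ) :
    pd (fun y => y i - y j) k x =
      (Pi.single k 1 : Fin n → ℝ) i - (Pi.single k 1 : Fin n → ℝ) j := by
  rw [pd, ((hasFDerivAt_apply i x).fun_sub (hasFDerivAt_apply j x)).fderiv]
  rfl

theorem lieD_coord_sub {n : ℕ} (Z : Fin n → (Fin n → ℝ) → ℝ) (i j : Fin n) (x : Fin n → ℝ) :
    lieD Z (fun y => y i - y j) x = Z i x - Z j x := by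
  simp only [lieD, pd_coord_sub, Pi.single_apply, mul_sub, mul_ite, mul_one, mul_zero,
    Finset.sum_sub_distrib, Finset.sum_ite_eq, Finset.mem_univ, if_true]

/-- d₁ = x₂ − x₃, d₂ = x₁ − x₃, d₃ = x₁ − x₂ are Darboux polynomials of the
generalized Darboux–Halphen field, with the classical cofactors −2x₁, −2x₂, −2x₃. -/
theorem generalized_darboux_halphen_darboux_polynomials (a₁ a₂ a₃ : ℝ) (x : Fin 3 → ℝ) :
    lieD (GDH a₁ a₂ a₃) (fun y => y 1 - y 2) x = -2 * x 0 * (x 1 - x 2) ∧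
    lieD (GDH a₁ a₂ a₃) (fun y => y 0 - y 2) x = -2 * x 1 * (x 0 - x 2) ∧
    lieD (GDH a₁ a₂ a₃) (fun y => y 0 - y 1) x = -2 * x 2 * (x 0 - x 1) := by
  simp only [lieD_coord_sub, GDH, Matrix.cons_val_zero, Matrix.cons_val_one, Matrix.cons_val_two,
    Matrix.head_cons, Matrix.tail_cons]
  -- τ enters every component of the field identically, so it cancels in each difference.
  refine ⟨?_, ?_, ?_⟩ <;> ring
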